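/- For every integer k≥3, the F(k) sets R_{k−3,0}, R_{k−3,1}, …, R_{k−3,F(k−1)−1}, R_{k−2,0}, R_{k−2,1}, …, R_{k−2,F(k−2)−1} are pairwise disjoint and their union is ℕ (this is the k-th standard Fibonacci-like partition of the first kind). -/

import Mathlib

/-- The golden ratio φ = (1 + √5)/2. -/
noncomputable def phi : ℝ := (1 + Real.sqrt 5) / 2

/-- The lower Wythoff sequence a(n) = ⌊nφ⌋. -/
noncomputable def wa (n : ℕ) : ℕ := ⌊(n : ℝ) * phi⌋₊

/-- f_{i,j}(n) = F(i+1)·a(n) + F(i)·n − j. -/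
noncomputable def fij (i : ℕ) (j : ℤ) (n : ℕ) : ℤ :=
  (Nat.fib (i + 1) : ℤ) * wa n + (Nat.fib i : ℤ) * n - j

/-- R_{i,j} = { f_{i,j}(n) : n ∈ ℕ, n ≥ 1 }. -/
def R (i : ℕ) (j : ℤ) : Set ℤ := {m | ∃ n : ℕ, 0 < n ∧ fij i j n = m}

/-- The index set of the k-th standard Fibonacci-like partition of the first kind:
pairs (i, j) with i = k−3, 0 ≤ j ≤ F(k−1)−1 or i = k−2, 0 ≤ j ≤ F(k−2)−1. -/
def IdxFirst (k : ℕ) : Set (ℕ × ℤ) :=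
  {p | (p.1 = k - 3 ∧ 0 ≤ p.2 ∧ p.2 < (Nat.fib (k - 1) : ℤ)) ∨
       (p.1 = k - 2 ∧ 0 ≤ p.2 ∧ p.2 < (Nat.fib (k - 2) : ℤ))}

/-!
By Rayleigh's theorem the ranges of `a` and `b = a + id` on `ℕ⁺` partition `ℕ⁺`, since
`1/φ + 1/φ² = 1`. From `φ² = φ + 1` one gets `a(a(n)) = a(n) + n - 1` and `a(b(n)) = a(n) + b(n)`,
hence `f_{i,j} ∘ a = f_{i+1, j+F(i+1)}` and `f_{i,j} ∘ b = f_{i+2, j}` on `ℕ⁺`. As `f_{i,j}` is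
injective, `R_{i,j}` is the disjoint union of `R_{i+1, j+F(i+1)}` and `R_{i+2, j}`. For `k = 3`
the partition `{R_{0,0}, R_{1,0}}` is Rayleigh's, and the `(k+1)`-st partition is obtained from
the `k`-th by splitting each block `R_{k-3, j}` in this way.
-/

open Real
open scoped symmDiff

section Partition

variable {ι α : Type*}

def IsPartitionOf (X : ι → Set α) (I : Set ι) (U : Set α) : Prop :=
  I.PairwiseDisjoint X ∧ ⋃ i ∈ I, X i = U

lemma isPartitionOf_singleton (X : ι → Set α) (i : ι) : IsPartitionOf X {i} (X i) :=
  ⟨Set.pairwiseDisjoint_singleton i X, Set.biUnion_singleton i X⟩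

lemma isPartitionOf_pair {X : ι → Set α} {i j : ι} (h : Disjoint (X i) (X j)) :
    IsPartitionOf X {i, j} (X i ∪ X j) := by
  refine ⟨Set.pairwise_pair.2 fun _ => ⟨h, h.symm⟩, ?_⟩
  rw [Set.biUnion_insert, Set.biUnion_singleton]

lemma IsPartitionOf.biUnion {X : ι → Set α} {I : Set ι} {U : Set α} {C : ι → Set ι}
    (hI : IsPartitionOf X I U) (hC : ∀ i ∈ I, IsPartitionOf X (C i) (X i)) :
    IsPartitionOf X (⋃ i ∈ I, C i) U := by
  refine ⟨hI.1.mono_on (fun i hi => (hC i hi).2.le) |>.biUnion fun i hi => (hC i hi).1, ?_⟩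
  rw [← hI.2]
  simp only [Set.biUnion_iUnion]
  exact Set.iUnion₂_congr fun i hi => (hC i hi).2

lemma IsPartitionOf.refine {X : ι → Set α} {A B : Set ι} {U : Set α} {C : ι → Set ι}
    (hP : IsPartitionOf X (A ∪ B) U) (hAB : Disjoint A B)
    (hC : ∀ i ∈ B, IsPartitionOf X (C i) (X i)) :
    IsPartitionOf X (A ∪ ⋃ i ∈ B, C i) U := by
  classical
  have hidx : A ∪ ⋃ i ∈ B, C i = ⋃ i ∈ A ∪ B, if i ∈ A then {i} else C i := by
    rw [Set.biUnion_union]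
    congr 1
    · conv_rhs => enter [1, i, 1, hi]; rw [if_pos hi]
      exact (Set.biUnion_of_singleton A).symm
    · exact Set.iUnion₂_congr fun i hi => (if_neg (hAB.notMem_of_mem_right hi)).symm
  rw [hidx]
  refine hP.biUnion fun i hi => ?_
  split_ifs with hiA
  · exact isPartitionOf_singleton X i
  · exact hC i (hi.resolve_left hiA)

end Partition

lemma one_lt_phi : 1 < phi := one_lt_goldenRatio

lemma phi_sq : phi ^ 2 = phi + 1 := goldenRatio_sq

lemma irrational_phi : Irrational phi := goldenRatio_irrational

lemma holderConjugate_phi : phi.HolderConjugate (phi + 1) := by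
  rw [holderConjugate_iff_eq_conjExponent one_lt_phi, eq_div_iff (sub_pos.2 one_lt_phi).ne']
  linear_combination phi_sq

/-- The upper Wythoff sequence: `b(n) = ⌊nφ²⌋ = a(n) + n` because `φ² = φ + 1`. -/
noncomputable def wb (n : ℕ) : ℕ := wa n + n

lemma natCast_mul_phi_eq (n : ℕ) : (n : ℝ) * phi = wa n + Int.fract ((n : ℝ) * phi) := by
  rw [wa, natCast_floor_eq_intCast_floor (by positivity [one_lt_phi]), Int.floor_add_fract]

lemma fract_natCast_mul_phi_pos {n : ℕ} (hn : 0 < n) : 0 < Int.fract ((n : ℝ) * phi) :=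
  Int.fract_pos.2 fun h => (irrational_phi.natCast_mul hn.ne').ne_int _ h

lemma wa_pos {n : ℕ} (hn : 0 < n) : 0 < wa n := by
  rw [wa, Nat.floor_pos]
  have : (1 : ℝ) ≤ n := by exact_mod_cast hn
  nlinarith [one_lt_phi]

lemma wa_strictMono : StrictMono wa := by
  refine strictMono_nat_of_lt_succ fun n => ?_
  have hn := natCast_mul_phi_eq n
  have hn1 := natCast_mul_phi_eq (n + 1)
  have := Int.fract_nonneg ((n : ℝ) * phi)
  have := Int.fract_lt_one (((n + 1 : ℕ) : ℝ) * phi)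
  have : (wa n : ℝ) < wa (n + 1) := by push_cast at hn1 this ⊢; nlinarith [one_lt_phi]
  exact_mod_cast this

lemma natCast_wa (n : ℕ) : (wa n : ℤ) = ⌊(n : ℝ) * phi⌋ :=
  Int.natCast_floor_eq_floor (by positivity [one_lt_phi])

/-- With `θ = {nφ}`, `a(n)φ = a(n) + n - θ(φ - 1)` and `0 < θ(φ - 1) < 1`. -/
lemma wa_wa {n : ℕ} (hn : 0 < n) : (wa (wa n) : ℤ) = wa n + n - 1 := by
  have hθ := natCast_mul_phi_eq n
  have hθ0 := fract_natCast_mul_phi_pos hn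
  have hθ1 := Int.fract_lt_one ((n : ℝ) * phi)
  rw [natCast_wa, Int.floor_eq_iff]
  push_cast
  constructor <;> nlinarith [phi_sq, one_lt_phi]

/-- With `θ = {nφ}`, `b(n)φ = 2a(n) + n + θ(2 - φ)` and `0 < θ(2 - φ) < 1`. -/
lemma wa_wb {n : ℕ} (hn : 0 < n) : (wa (wb n) : ℤ) = wa n + wb n := by
  have hθ := natCast_mul_phi_eq n
  have hθ0 := fract_natCast_mul_phi_pos hn
  have hθ1 := Int.fract_lt_one ((n : ℝ) * phi)
  rw [natCast_wa, Int.floor_eq_iff, wb]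
  push_cast
  constructor <;> nlinarith [phi_sq, one_lt_phi, goldenRatio_lt_two]

lemma natCast_image_setOf_pos : ((↑) : ℕ → ℤ) '' {n | 0 < n} = {m | 0 < m} :=
  Nat.image_cast_int_Ioi 0

lemma setOf_pos_eq_natCast_image {f : ℕ → ℕ} {g : ℤ → ℤ} (hfg : ∀ n : ℕ, g n = f n) :
    {g k | k > 0} = ((↑) : ℕ → ℤ) '' (f '' {n | 0 < n}) := by
  ext m
  simp only [Set.mem_ofPred_eq, Set.image_image, Set.mem_image]
  constructor
  · rintro ⟨k, hk, rfl⟩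
    lift k to ℕ using hk.le
    exact ⟨k, by exact_mod_cast hk, (hfg k).symm⟩
  · rintro ⟨n, hn, rfl⟩
    exact ⟨n, by exact_mod_cast hn, hfg n⟩

lemma image_wa_symmDiff_image_wb : (wa '' {n | 0 < n}) ∆ (wb '' {n | 0 < n}) = {n | 0 < n} := by
  have hrayleigh := irrational_phi.beattySeq_symmDiff_beattySeq_pos holderConjugate_phi
  rw [setOf_pos_eq_natCast_image (f := wa) fun n => by simp [beattySeq, natCast_wa],
    setOf_pos_eq_natCast_image (f := wb) fun n => by
      simp [beattySeq, natCast_wa, wb, mul_add, Int.floor_add_natCast],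
    ← Set.image_symmDiff Nat.cast_injective] at hrayleigh
  apply Set.image_injective.2 (Nat.cast_injective (R := ℤ))
  rw [hrayleigh, natCast_image_setOf_pos]

lemma image_wa_union_image_wb : wa '' {n | 0 < n} ∪ wb '' {n | 0 < n} = {n | 0 < n} := by
  refine le_antisymm ?_ (image_wa_symmDiff_image_wb.ge.trans symmDiff_le_sup)
  rintro _ (⟨n, hn, rfl⟩ | ⟨n, hn, rfl⟩)
  · exact wa_pos hn
  · exact Nat.add_pos_right _ hn

lemma disjoint_image_wa_image_wb : Disjoint (wa '' {n | 0 < n}) (wb '' {n | 0 < n}) :=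
  (symmDiff_eq_sup _ _).1 (image_wa_symmDiff_image_wb.trans image_wa_union_image_wb.symm)

lemma fij_wa (i : ℕ) (j : ℤ) {n : ℕ} (hn : 0 < n) :
    fij i j (wa n) = fij (i + 1) (j + Nat.fib (i + 1)) n := by
  rw [fij, fij, wa_wa hn, Nat.fib_add_two]
  push_cast
  ring

lemma fij_wb (i : ℕ) (j : ℤ) {n : ℕ} (hn : 0 < n) : fij i j (wb n) = fij (i + 2) j n := by
  simp only [fij, wa_wb hn, Nat.fib_add_two]
  push_cast [wb]
  ring

lemma fij_strictMono (i : ℕ) (j : ℤ) : StrictMono (fij i j) := by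
  intro m n hmn
  have hwa : (wa m : ℤ) < wa n := by exact_mod_cast wa_strictMono hmn
  have hfib : (0 : ℤ) < Nat.fib (i + 1) := by exact_mod_cast Nat.fib_pos.2 i.succ_pos
  have : (Nat.fib i : ℤ) * m ≤ Nat.fib i * n := by gcongr
  simp only [fij]
  nlinarith

lemma R_eq_image (i : ℕ) (j : ℤ) : R i j = fij i j '' {n | 0 < n} := rfl

lemma R_succ_eq_image (i : ℕ) (j : ℤ) :
    R (i + 1) (j + Nat.fib (i + 1)) = fij i j '' (wa '' {n | 0 < n}) := by
  rw [Set.image_image]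
  exact (Set.image_congr fun n hn => fij_wa i j hn).symm

lemma R_add_two_eq_image (i : ℕ) (j : ℤ) : R (i + 2) j = fij i j '' (wb '' {n | 0 < n}) := by
  rw [Set.image_image]
  exact (Set.image_congr fun n hn => fij_wb i j hn).symm

lemma R_eq_union (i : ℕ) (j : ℤ) : R i j = R (i + 1) (j + Nat.fib (i + 1)) ∪ R (i + 2) j := by
  rw [R_succ_eq_image, R_add_two_eq_image, ← Set.image_union, image_wa_union_image_wb]
  rfl

lemma disjoint_R (i : ℕ) (j : ℤ) : Disjoint (R (i + 1) (j + Nat.fib (i + 1))) (R (i + 2) j) := by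
  rw [R_succ_eq_image, R_add_two_eq_image]
  exact (Set.disjoint_image_iff (fij_strictMono i j).injective).2 disjoint_image_wa_image_wb

lemma R_zero_zero : R 0 0 = ((↑) : ℕ → ℤ) '' (wa '' {n | 0 < n}) := by
  rw [R_eq_image, Set.image_image]
  exact Set.image_congr' fun n => by simp [fij]

lemma R_one_zero : R 1 0 = ((↑) : ℕ → ℤ) '' (wb '' {n | 0 < n}) := by
  rw [R_eq_image, Set.image_image]
  exact Set.image_congr' fun n => by simp [fij, wb]

def idxRow (i c : ℕ) : Set (ℕ × ℤ) := {p | p.1 = i ∧ 0 ≤ p.2 ∧ p.2 < c}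

def childIdx (p : ℕ × ℤ) : Set (ℕ × ℤ) := {(p.1 + 1, p.2 + Nat.fib (p.1 + 1)), (p.1 + 2, p.2)}

lemma isPartitionOf_childIdx (p : ℕ × ℤ) :
    IsPartitionOf (Function.uncurry R) (childIdx p) (Function.uncurry R p) := by
  have h := isPartitionOf_pair (X := Function.uncurry R)
    (i := (p.1 + 1, p.2 + Nat.fib (p.1 + 1))) (j := (p.1 + 2, p.2)) (disjoint_R p.1 p.2)
  rwa [Function.uncurry_apply_pair, Function.uncurry_apply_pair, ← R_eq_union] at h

lemma idxFirst_three : IdxFirst 3 = {(0, 0), (1, 0)} := by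
  ext ⟨i, j⟩
  simp only [IdxFirst, tsub_self, Nat.add_one_sub_one, Nat.fib_two, Nat.cast_one, Nat.reduceSub,
    Nat.fib_one, Set.mem_ofPred_eq, Set.mem_insert_iff, Prod.mk.injEq, Set.mem_singleton_iff]
  omega

lemma idxFirst_add_three (t : ℕ) :
    IdxFirst (t + 3) = idxRow (t + 1) (Nat.fib (t + 1)) ∪ idxRow t (Nat.fib (t + 2)) := by
  ext ⟨i, j⟩
  simp [IdxFirst, idxRow, or_comm]

lemma idxFirst_add_four (t : ℕ) :
    IdxFirst (t + 4) =
      idxRow (t + 1) (Nat.fib (t + 1)) ∪ ⋃ p ∈ idxRow t (Nat.fib (t + 2)), childIdx p := by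
  have hfib : (Nat.fib (t + 3) : ℤ) = Nat.fib (t + 1) + Nat.fib (t + 2) := by
    exact_mod_cast Nat.fib_add_two
  ext ⟨i, j⟩
  simp only [IdxFirst, Nat.reduceSubDiff, Nat.add_one_sub_one, Set.mem_ofPred_eq, idxRow, childIdx,
    Set.mem_union, Set.mem_iUnion, Set.mem_insert_iff, Prod.mk.injEq, Set.mem_singleton_iff,
    exists_prop, Prod.exists, ↓existsAndEq, true_and]
  constructor
  · rintro (⟨rfl, hj0, hj⟩ | ⟨rfl, hj0, hj⟩)
    · by_cases hj1 : j < Nat.fib (t + 1)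
      · exact Or.inl ⟨rfl, hj0, hj1⟩
      · exact Or.inr ⟨j - Nat.fib (t + 1), ⟨by omega, by omega⟩, Or.inl ⟨rfl, by ring⟩⟩
    · exact Or.inr ⟨j, ⟨hj0, hj⟩, Or.inr ⟨rfl, rfl⟩⟩
  · rintro (⟨rfl, hj0, hj⟩ | ⟨b, ⟨hb0, hb⟩, ⟨rfl, rfl⟩ | ⟨rfl, rfl⟩⟩) <;> omega

lemma disjoint_idxRow {i i' : ℕ} (h : i ≠ i') (c c' : ℕ) :
    Disjoint (idxRow i c) (idxRow i' c') :=
  Set.disjoint_left.2 fun _ hp hp' => h (hp.1.symm.trans hp'.1)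

lemma isPartitionOf_idxFirst_three :
    IsPartitionOf (Function.uncurry R) (IdxFirst 3) {m | 0 < m} := by
  have hdisj : Disjoint (R 0 0) (R 1 0) := by
    rw [R_zero_zero, R_one_zero]
    exact (Set.disjoint_image_iff Nat.cast_injective).2 disjoint_image_wa_image_wb
  have hunion : R 0 0 ∪ R 1 0 = {m | 0 < m} := by
    rw [R_zero_zero, R_one_zero, ← Set.image_union, image_wa_union_image_wb,
      natCast_image_setOf_pos]
  rw [idxFirst_three, ← hunion]
  exact isPartitionOf_pair hdisj

lemma isPartitionOf_idxFirst (t : ℕ) :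
    IsPartitionOf (Function.uncurry R) (IdxFirst (t + 3)) {m | 0 < m} := by
  induction t with
  | zero => exact isPartitionOf_idxFirst_three
  | succ t ih =>
    rw [idxFirst_add_three] at ih
    rw [idxFirst_add_four]
    exact ih.refine (disjoint_idxRow t.succ_ne_self _ _) fun p _ => isPartitionOf_childIdx p

theorem stmt_2 (k : ℕ) (hk : 3 ≤ k) :
    (∀ p ∈ IdxFirst k, ∀ q ∈ IdxFirst k, p ≠ q → R p.1 p.2 ∩ R q.1 q.2 = ∅) ∧
    (⋃ p ∈ IdxFirst k, R p.1 p.2) = {m : ℤ | 0 < m} := by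
  obtain ⟨t, rfl⟩ : ∃ t, k = t + 3 := ⟨k - 3, by omega⟩
  obtain ⟨hdisj, hunion⟩ := isPartitionOf_idxFirst t
  exact ⟨fun p hp q hq hpq => Set.disjoint_iff_inter_eq_empty.1 (hdisj hp hq hpq), hunion⟩
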